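/- Let b > 0, z > 0 be real and ν < 0 be real with Φ(ν,b,z) = 0. Then ∫₀^z t^{b-1} e^{-t} Φ²(ν,b,t) dt ≥ (2ν² e^{-z} z^{b+1} / (b²(b − 2ν))) · Φ²(ν+1, b+1, z). -/

import Mathlib

/-!
Along any solution `y` of Kummer's equation `t y'' + (b - t) y' - ν y = 0`, the function
`E = e^(-t) t^b (2 t y'^2 + 2 (b - 1 - t) y y' + (1 - 2ν) y^2)` has derivative
`((b - 2ν) t^(b-1) - t^b) e^(-t) y^2`. Integrating over `[0, z]`, where `E(0) = 0` and `y(z) = 0`,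
gives `(b - 2ν) ∫ t^(b-1) e^(-t) y^2 = 2 z^(b+1) e^(-z) y'(z)^2 + ∫ t^b e^(-t) y^2`, and the last
integral is nonnegative. For `y = Φ(ν, b, ·)` one has `y' = (ν / b) Φ(ν + 1, b + 1, ·)`.
-/

open Real

/-- The confluent hypergeometric function of the first kind
`Φ(a,b,z) = Σ_{n≥0} (a)_n / ((b)_n n!) z^n`. -/
noncomputable def Phi (a b z : ℝ) : ℝ :=
  ∑' n : ℕ, ((ascPochhammer ℝ n).eval a / ((ascPochhammer ℝ n).eval b * (n.factorial : ℝ))) * z ^ n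

open Filter Set MeasureTheory

theorem hasDerivAt_tsum_mul_pow {c : ℕ → ℝ} (hc : ∀ x, Summable fun n => c n * x ^ n)
    (hc' : ∀ x, Summable fun n : ℕ => ((n : ℝ) + 1) * c (n + 1) * x ^ n) (x : ℝ) :
    HasDerivAt (fun y => ∑' n, c n * y ^ n) (∑' n : ℕ, ((n : ℝ) + 1) * c (n + 1) * x ^ n) x := by
  set R := |x| + 1
  have hsplit :
      (fun y => ∑' n, c n * y ^ n) = fun y => c 0 + ∑' n, c (n + 1) * y ^ (n + 1) := by
    funext y
    simpa using (hc y).tsum_eq_zero_add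
  have hterm : ∀ (n : ℕ) (y : ℝ), HasDerivAt (fun y => c (n + 1) * y ^ (n + 1))
      (((n : ℝ) + 1) * c (n + 1) * y ^ n) y := fun n y => by
    have h := (hasDerivAt_pow (n + 1) y).const_mul (c (n + 1))
    rw [Nat.add_sub_cancel, Nat.cast_succ] at h
    exact h.congr_deriv (by ring)
  have hbound : ∀ n : ℕ, ∀ y ∈ Metric.ball (0 : ℝ) R,
      ‖((n : ℝ) + 1) * c (n + 1) * y ^ n‖ ≤ |((n : ℝ) + 1) * c (n + 1) * R ^ n| := by
    intro n y hy
    rw [mem_ball_zero_iff] at hy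
    rw [Real.norm_eq_abs, abs_mul, abs_mul (_ * _), abs_pow, abs_pow,
      abs_of_pos (by positivity : 0 < R)]
    gcongr
    exact hy.le
  rw [hsplit]
  refine HasDerivAt.const_add _ (hasDerivAt_tsum_of_isPreconnected (hc' R).abs Metric.isOpen_ball
    (convex_ball 0 R).isPreconnected (fun n y _ => hterm n y) hbound (y₀ := x) ?_ ?_ ?_)
  · simp [R]
  · exact (summable_nat_add_iff 1).mpr (hc x)
  · simp [R]

theorem HasSum.natCast_mul_mul_pow {d : ℕ → ℝ} {x s : ℝ}
    (h : HasSum (fun n : ℕ => ((n : ℝ) + 1) * d (n + 1) * x ^ n) s) :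
    HasSum (fun n : ℕ => (n : ℝ) * d n * x ^ n) (x * s) := by
  refine (hasSum_nat_add_iff' 1).mp ?_
  simp only [Finset.range_one, Finset.sum_singleton, CharP.cast_eq_zero, zero_mul, sub_zero]
  refine (h.mul_left x).congr_fun fun n => ?_
  push_cast
  ring

noncomputable def phiCoeff (a b : ℝ) (n : ℕ) : ℝ :=
  (ascPochhammer ℝ n).eval a / ((ascPochhammer ℝ n).eval b * (n.factorial : ℝ))

theorem Phi_eq_tsum (a b : ℝ) : Phi a b = fun z => ∑' n, phiCoeff a b n * z ^ n := rfl

theorem phiCoeff_succ {b : ℝ} (hb : 0 < b) (a : ℝ) (n : ℕ) :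
    (b + n) * (n + 1) * phiCoeff a b (n + 1) = (a + n) * phiCoeff a b n := by
  have := ascPochhammer_pos n b hb
  have : (n.factorial : ℝ) ≠ 0 := by positivity
  rw [phiCoeff, phiCoeff, ascPochhammer_succ_eval, ascPochhammer_succ_eval, Nat.factorial_succ]
  push_cast
  field_simp

theorem succ_mul_phiCoeff_succ {b : ℝ} (hb : 0 < b) (a : ℝ) (n : ℕ) :
    (n + 1) * phiCoeff a b (n + 1) = a / b * phiCoeff (a + 1) (b + 1) n := by
  have := ascPochhammer_pos n (b + 1) (by linarith)
  have : (n.factorial : ℝ) ≠ 0 := by positivity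
  simp only [phiCoeff, ascPochhammer_succ_left, Polynomial.eval_mul, Polynomial.eval_X,
    Polynomial.eval_comp, Polynomial.eval_add, Polynomial.eval_one, Nat.factorial_succ]
  push_cast
  field_simp

theorem summable_phiCoeff_mul_pow {b : ℝ} (hb : 0 < b) (a x : ℝ) :
    Summable fun n : ℕ => phiCoeff a b n * x ^ n := by
  refine summable_of_ratio_norm_eventually_le (r := 1 / 2) (by norm_num) ?_
  filter_upwards [eventually_ge_atTop ⌈|a|⌉₊, eventually_ge_atTop ⌈4 * |x|⌉₊] with n ha hx
  rw [Nat.ceil_le] at ha hx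
  have hD : 0 < (b + n) * (n + 1) := by positivity
  have hsmall : |a + n| * |x| ≤ (b + n) * (n + 1) / 2 := by
    have : |a + n| ≤ 2 * (b + n) :=
      (abs_add_le a n).trans (by rw [Nat.abs_cast]; linarith)
    nlinarith [abs_nonneg x, abs_nonneg (a + n)]
  have hnorm : ‖phiCoeff a b (n + 1) * x ^ (n + 1)‖ * ((b + n) * (n + 1))
      = |a + n| * |x| * ‖phiCoeff a b n * x ^ n‖ := by
    have := congrArg (fun t => |t * x ^ (n + 1)|) (phiCoeff_succ hb a n)
    simp only [abs_mul, abs_of_pos hD, abs_pow] at this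
    simp only [Real.norm_eq_abs, abs_mul, abs_pow, pow_succ]
    linear_combination this
  refine le_of_mul_le_mul_right ?_ hD
  rw [hnorm]
  nlinarith [norm_nonneg (phiCoeff a b n * x ^ n)]

theorem hasSum_succ_mul_phiCoeff_succ {b : ℝ} (hb : 0 < b) (a x : ℝ) :
    HasSum (fun n : ℕ => ((n : ℝ) + 1) * phiCoeff a b (n + 1) * x ^ n)
      (a / b * Phi (a + 1) (b + 1) x) := by
  simp_rw [succ_mul_phiCoeff_succ hb, mul_assoc]
  exact (summable_phiCoeff_mul_pow (by linarith) (a + 1) x).hasSum.mul_left (a / b)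

theorem hasDerivAt_Phi {b : ℝ} (hb : 0 < b) (a x : ℝ) :
    HasDerivAt (Phi a b) (a / b * Phi (a + 1) (b + 1) x) x := by
  rw [← (hasSum_succ_mul_phiCoeff_succ hb a x).tsum_eq, Phi_eq_tsum]
  exact hasDerivAt_tsum_mul_pow (summable_phiCoeff_mul_pow hb a)
    (fun x => (hasSum_succ_mul_phiCoeff_succ hb a x).summable) x

theorem continuous_Phi {b : ℝ} (hb : 0 < b) (a : ℝ) : Continuous (Phi a b) :=
  continuous_iff_continuousAt.mpr fun x => (hasDerivAt_Phi hb a x).continuousAt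

theorem Phi_kummer_ode {b : ℝ} (hb : 0 < b) (a x : ℝ) :
    x * (a / b * ((a + 1) / (b + 1) * Phi (a + 2) (b + 2) x))
      + (b - x) * (a / b * Phi (a + 1) (b + 1) x) - a * Phi a b x = 0 := by
  have hΦ : HasSum (fun n : ℕ => phiCoeff a b n * x ^ n) (Phi a b x) :=
    (summable_phiCoeff_mul_pow hb a x).hasSum
  have hΦ' := hasSum_succ_mul_phiCoeff_succ hb a x
  have hΦ'' : HasSum
      (fun n : ℕ => ((n : ℝ) + 1) * ((((n + 1 : ℕ) : ℝ) + 1) * phiCoeff a b (n + 1 + 1)) * x ^ n)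
      (a / b * ((a + 1) / (b + 1) * Phi (a + 2) (b + 2) x)) := by
    have h :=
      (hasSum_succ_mul_phiCoeff_succ (b := b + 1) (by linarith) (a + 1) x).mul_left (a / b)
    rw [show a + 1 + 1 = a + 2 by ring, show b + 1 + 1 = b + 2 by ring] at h
    refine h.congr_fun fun n => ?_
    linear_combination ((n : ℝ) + 1) * x ^ n * succ_mul_phiCoeff_succ hb a (n + 1)
  have hL := (hΦ''.natCast_mul_mul_pow
    (d := fun n => ((n : ℝ) + 1) * phiCoeff a b (n + 1))).add (hΦ'.mul_left b)
  have hR := hΦ'.natCast_mul_mul_pow.add (hΦ.mul_left a)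
  have hcoeff := hL.unique <| hR.congr_fun fun n => by
    linear_combination x ^ n * phiCoeff_succ hb a n
  linear_combination hcoeff

noncomputable def kummerPrimitive (b ν : ℝ) (y y' : ℝ → ℝ) (t : ℝ) : ℝ :=
  exp (-t) * t ^ b *
    (2 * t * y' t ^ 2 + 2 * (b - 1 - t) * y t * y' t + (1 - 2 * ν) * y t ^ 2)

theorem hasDerivAt_kummerPrimitive {b ν t y₂ : ℝ} {y y' : ℝ → ℝ} (ht : 0 < t)
    (hy : HasDerivAt y (y' t) t) (hy' : HasDerivAt y' y₂ t)
    (hode : t * y₂ + (b - t) * y' t - ν * y t = 0) :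
    HasDerivAt (kummerPrimitive b ν y y')
      (((b - 2 * ν) * t ^ (b - 1) - t ^ b) * exp (-t) * y t ^ 2) t := by
  have hexp : HasDerivAt (fun s => exp (-s)) (-exp (-t)) t := by
    simpa using (hasDerivAt_neg t).exp
  have hpow := hasDerivAt_rpow_const (p := b) (Or.inl ht.ne')
  have hQ := ((((hasDerivAt_id t).const_mul 2).mul (hy'.pow 2)).add
    ((((hasDerivAt_id t).const_sub (b - 1)).const_mul 2).mul hy |>.mul hy')).add
    ((hy.pow 2).const_mul (1 - 2 * ν))
  refine ((hexp.mul hpow).mul hQ).congr_deriv ?_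
  have htb : t ^ b = t ^ (b - 1) * t := by
    rw [rpow_sub_one ht.ne', div_mul_cancel₀ _ ht.ne']
  simp only [Pi.mul_apply, Pi.add_apply, Pi.pow_apply, id]
  rw [htb]
  linear_combination exp (-t) * t ^ (b - 1) * (4 * t * y' t + 2 * (b - 1 - t) * y t) * hode

theorem integral_rpow_mul_exp_mul_sq_of_kummer {b ν z : ℝ} {y y' y'' : ℝ → ℝ} (hb : 0 < b)
    (hz : 0 < z) (hyc : ContinuousOn y (Icc 0 z)) (hy'c : ContinuousOn y' (Icc 0 z))
    (hy : ∀ t ∈ Ioo 0 z, HasDerivAt y (y' t) t) (hy' : ∀ t ∈ Ioo 0 z, HasDerivAt y' (y'' t) t)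
    (hode : ∀ t ∈ Ioo 0 z, t * y'' t + (b - t) * y' t - ν * y t = 0) (hyz : y z = 0) :
    (b - 2 * ν) * ∫ t in 0..z, t ^ (b - 1) * exp (-t) * y t ^ 2
      = 2 * z ^ (b + 1) * exp (-z) * y' z ^ 2 + ∫ t in 0..z, t ^ b * exp (-t) * y t ^ 2 := by
  have hpow : ContinuousOn (fun t : ℝ => t ^ b) (Icc 0 z) :=
    continuousOn_id.rpow_const fun _ _ => Or.inr hb.le
  have hexp : ContinuousOn (fun t => exp (-t)) (Icc 0 z) := by fun_prop
  have hE : ContinuousOn (kummerPrimitive b ν y y') (Icc 0 z) := by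
    unfold kummerPrimitive
    fun_prop
  rw [← uIcc_of_le hz.le] at hyc hexp hpow
  have hint₁ : IntervalIntegrable (fun t => t ^ (b - 1) * exp (-t) * y t ^ 2) volume 0 z :=
    ((intervalIntegral.intervalIntegrable_rpow' (by linarith)).mul_continuousOn
      hexp).mul_continuousOn (hyc.pow 2)
  have hint₂ : IntervalIntegrable (fun t => t ^ b * exp (-t) * y t ^ 2) volume 0 z :=
    ((hpow.mul hexp).mul (hyc.pow 2)).intervalIntegrable
  have hFTC := intervalIntegral.integral_eq_sub_of_hasDerivAt_of_le
    (f' := fun t =>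
      (b - 2 * ν) * (t ^ (b - 1) * exp (-t) * y t ^ 2) - t ^ b * exp (-t) * y t ^ 2)
    hz.le hE (fun t ht => (hasDerivAt_kummerPrimitive ht.1 (hy t ht) (hy' t ht)
      (hode t ht)).congr_deriv (by ring)) ((hint₁.const_mul (b - 2 * ν)).sub hint₂)
  rw [intervalIntegral.integral_sub (hint₁.const_mul _) hint₂, intervalIntegral.integral_const_mul]
    at hFTC
  simp only [kummerPrimitive, hyz, zero_rpow hb.ne', neg_zero, mul_zero, zero_mul, sub_zero]
    at hFTC
  rw [rpow_add_one hz.ne']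
  linear_combination hFTC

theorem stmt13 (b z ν : ℝ) (hb : 0 < b) (hz : 0 < z) (hν : ν < 0)
    (hzero : Phi ν b z = 0) :
    (2 * ν ^ 2 * Real.exp (-z) * z ^ (b + 1) / (b ^ 2 * (b - 2 * ν))) *
        (Phi (ν + 1) (b + 1) z) ^ 2 ≤
      ∫ t in (0 : ℝ)..z, t ^ (b - 1) * Real.exp (-t) * (Phi ν b t) ^ 2 := by
  have hb₁ : 0 < b + 1 := by linarith
  have hΦ'' : ∀ t, HasDerivAt (fun s => ν / b * Phi (ν + 1) (b + 1) s)
      (ν / b * ((ν + 1) / (b + 1) * Phi (ν + 2) (b + 2) t)) t := fun t => by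
    have h := (hasDerivAt_Phi hb₁ (ν + 1) t).const_mul (ν / b)
    rwa [show ν + 1 + 1 = ν + 2 by ring, show b + 1 + 1 = b + 2 by ring] at h
  have hidentity := integral_rpow_mul_exp_mul_sq_of_kummer hb hz
    (continuous_Phi hb ν).continuousOn ((continuous_Phi hb₁ _).const_mul _).continuousOn
    (fun t _ => hasDerivAt_Phi hb ν t) (fun t _ => hΦ'' t) (fun t _ => Phi_kummer_ode hb ν t) hzero
  have htail : 0 ≤ ∫ t in (0 : ℝ)..z, t ^ b * exp (-t) * Phi ν b t ^ 2 :=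
    intervalIntegral.integral_nonneg hz.le fun t ht => by
      have := rpow_nonneg ht.1 b
      positivity
  have hgap : 0 < b - 2 * ν := by linarith
  rw [div_mul_eq_mul_div, div_le_iff₀ (by positivity)]
  calc 2 * ν ^ 2 * exp (-z) * z ^ (b + 1) * Phi (ν + 1) (b + 1) z ^ 2
      = b ^ 2 * (2 * z ^ (b + 1) * exp (-z) * (ν / b * Phi (ν + 1) (b + 1) z) ^ 2) := by
        field_simp
    _ ≤ b ^ 2 *
          ((b - 2 * ν) * ∫ t in (0 : ℝ)..z, t ^ (b - 1) * exp (-t) * Phi ν b t ^ 2) := by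
        rw [hidentity]
        gcongr
        exact le_add_of_nonneg_right htail
    _ = _ := by ring
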